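/- arXiv:1908.02912 — 2 statements merged into one kernel-verified Lean document; each statement's English description precedes it below -/
import Mathlib

section
/- Let Λ be an Artin algebra and M a finitely generated Λ-module with injective hull ι_M : M → I(M). If P is injective and α : M → P is an irreducible monomorphism in the category of finitely generated Λ-modules, then α is an essential monomorphism and the induced map I(M) → P (a morphism δ with α = δ ∘ ι_M, which exists by injectivity of P) is an isomorphism. -/
universe u v

/-- Irreducibility of a linear map in the category of finitely generated `Λ`-modules:
it is neither a split mono nor a split epi, and in every factorization the first factor
is a split mono or the second factor is a split epi. -/
def IrredLinearMap (Λ : Type u) [Ring Λ] {M N : Type v} [AddCommGroup M] [Module Λ M]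
    [AddCommGroup N] [Module Λ N] (f : M →ₗ[Λ] N) : Prop :=
  (¬ ∃ r : N →ₗ[Λ] M, r ∘ₗ f = LinearMap.id) ∧
  (¬ ∃ s : N →ₗ[Λ] M, f ∘ₗ s = LinearMap.id) ∧
  ∀ (Z : Type v) [AddCommGroup Z] [Module Λ Z] [Module.Finite Λ Z]
    (u : M →ₗ[Λ] Z) (v : Z →ₗ[Λ] N), v ∘ₗ u = f →
      (∃ r : Z →ₗ[Λ] M, r ∘ₗ u = LinearMap.id) ∨ (∃ s : N →ₗ[Λ] Z, v ∘ₗ s = LinearMap.id)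

/-- Over an Artin algebra `Λ`, if `P` is injective and `α : M → P` is an irreducible
monomorphism of finitely generated modules, then `α` is an essential monomorphism and the
induced map `I(M) → P` from the injective hull `ι : M → I(M)` is an isomorphism. -/
theorem stmt_8 {k : Type u} {Λ : Type u} [Field k] [Ring Λ] [Algebra k Λ]
    [FiniteDimensional k Λ]
    {M I P : Type v} [AddCommGroup M] [Module Λ M] [Module.Finite Λ M]
    [AddCommGroup I] [Module Λ I] [Module.Finite Λ I]
    [AddCommGroup P] [Module Λ P] [Module.Finite Λ P]
    -- `ι : M → I` is an injective hull of `M`: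
    (ι : M →ₗ[Λ] I) (hIinj : Module.Injective Λ I) (hιinj : Function.Injective ι)
    (hιess : ∀ N : Submodule Λ I, N ≠ ⊥ → LinearMap.range ι ⊓ N ≠ ⊥)
    -- `α : M → P` is an irreducible monomorphism into an injective module `P`:
    (hPinj : Module.Injective Λ P) (α : M →ₗ[Λ] P) (hαmono : Function.Injective α)
    (hαirr : IrredLinearMap Λ α) :
    (∀ N : Submodule Λ P, N ≠ ⊥ → LinearMap.range α ⊓ N ≠ ⊥) ∧
    ∃ δ : I →ₗ[Λ] P, δ ∘ₗ ι = α ∧ Function.Bijective δ := by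

  obtain ⟨δ, hδ⟩ := hPinj.out ι hιinj α
  have hδι : δ ∘ₗ ι = α := LinearMap.ext hδ
  rcases hαirr.2.2 I ι δ hδι with ⟨r, hr⟩ | ⟨s, hs⟩
  · exfalso
    have hrι : ∀ m, r (ι m) = m := fun m => congrFun (congrArg DFunLike.coe hr) m
    have hker : LinearMap.ker r = ⊥ := by
      by_contra hk
      apply hιess _ hk
      rw [eq_bot_iff]
      rintro x ⟨⟨m, rfl⟩, hx⟩
      have : m = 0 := by rw [← hrι m]; exact hx
      simp [this]
    have hιsurj : Function.Surjective ι := by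
      intro y
      refine ⟨r y, ?_⟩
      have : r (ι (r y)) = r y := hrι (r y)
      have := sub_eq_zero.mpr this
      rw [← map_sub] at this
      have : ι (r y) - y = 0 := by
        rw [← LinearMap.mem_ker, hker] at this; simpa using this
      exact sub_eq_zero.mp this
    let e := LinearEquiv.ofBijective ι ⟨hιinj, hιsurj⟩
    obtain ⟨φ, hφ⟩ := hIinj.out α hαmono ι
    apply hαirr.1
    refine ⟨e.symm.toLinearMap ∘ₗ φ, ?_⟩
    ext m
    simp only [LinearMap.comp_apply, hφ, LinearMap.id_apply]
    exact e.symm_apply_apply m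
  · have hδsurj : Function.Surjective δ := fun y =>
      ⟨s y, congrFun (congrArg DFunLike.coe hs) y⟩
    have hδinj : Function.Injective δ := by
      rw [← LinearMap.ker_eq_bot]
      by_contra hk
      apply hιess _ hk
      rw [eq_bot_iff]
      rintro x ⟨⟨m, rfl⟩, hx⟩
      have : α m = 0 := by rw [← hδ m]; exact hx
      have : m = 0 := hαmono (by simpa using this)
      simp [this]
    refine ⟨?_, δ, hδι, hδinj, hδsurj⟩
    intro N hN
    obtain ⟨n, hnN, hn0⟩ := Submodule.exists_mem_ne_zero_of_ne_bot hN
    obtain ⟨x, rfl⟩ := hδsurj n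
    have hN' : N.comap δ ≠ ⊥ := by
      rw [Submodule.ne_bot_iff]
      exact ⟨x, hnN, fun h => hn0 (by simp [h])⟩
    obtain ⟨y, hy, hy0⟩ := Submodule.exists_mem_ne_zero_of_ne_bot (hιess _ hN')
    obtain ⟨hy1, hy2⟩ := Submodule.mem_inf.mp hy
    rw [Submodule.ne_bot_iff]
    refine ⟨δ y, Submodule.mem_inf.mpr ⟨?_, hy2⟩, fun h => hy0 (hδinj (by simpa using h))⟩
    obtain ⟨m, rfl⟩ := hy1
    exact ⟨m, (hδ m).symm⟩
end

section
/- Let A be an abelian category, I an injective object, and M →^{ι} I an essential monomorphism (injective hull). If α : M → P is a monomorphism into an injective object P that is not a split monomorphism, and δ : I → P satisfies α = δ ∘ ι, then δ is both a split epimorphism and a monomorphism, hence an isomorphism. -/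
open CategoryTheory

def Irred {C : Type*} [Category C] {X Y : C} (f : X ⟶ Y) : Prop :=
  ¬ IsSplitMono f ∧ ¬ IsSplitEpi f ∧
    ∀ ⦃Z : C⦄ (u : X ⟶ Z) (v : Z ⟶ Y), u ≫ v = f → IsSplitMono u ∨ IsSplitEpi v

/-- Let `ι : M → I` be an essential monomorphism into an injective object (an injective
hull) which is not a split mono, let `α : M → P` be an irreducible monomorphism into an
injective object `P`, and let `δ : I → P` satisfy `α = δ ∘ ι`.  Then `δ` is both a split
epimorphism and a monomorphism, hence an isomorphism. -/
theorem stmt_18 {A : Type*} [Category A] [Abelian A] {M I P : A}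
    (ι : M ⟶ I) [Mono ι] (hIinj : Injective I)
    (hιess : ∀ ⦃Z : A⦄ (g : I ⟶ Z), Mono (ι ≫ g) → Mono g)
    (hιns : ¬ IsSplitMono ι)
    (hPinj : Injective P)
    (α : M ⟶ P) [Mono α] (hαns : ¬ IsSplitMono α) (hαirr : Irred α)
    (δ : I ⟶ P) (hδ : ι ≫ δ = α) :
    IsSplitEpi δ ∧ Mono δ ∧ IsIso δ := by
  have hse : IsSplitEpi δ := by
    rcases hαirr.2.2 ι δ hδ with h | h
    · exact absurd h hιns
    · exact h
  have hm : Mono δ := hιess δ (hδ ▸ inferInstance)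
  refine ⟨hse, hm, ?_⟩
  haveI := hse
  haveI := hm
  exact isIso_of_mono_of_isSplitEpi δ
end
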